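/- Suppose t_∞ := lim_{n→∞} (l_1⋯l_n)/(r_1⋯r_n) exists and lies in (0,∞). Then for any non-decreasing sequence of stopping times (T_m)_{m≥1} with E[T_m] < ∞ for every m and T_m → T_∂ almost surely, the limit lim_{m→∞} E[X_{T_m}] exists and equals (1 + l_1/r_1 + ⋯ + (l_1⋯l_{k−1})/(r_1⋯r_{k−1})) / t_∞, i.e. x_k / t_∞. -/

import Mathlib

open MeasureTheory Filter Topology Finset
open scoped ENNReal NNReal Classical

/-- Partial products `t_n = (l_1 ⋯ l_n)/(r_1 ⋯ r_n)`, with `t_0 = 1`. -/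
noncomputable def tp (l r : ℕ → ℝ) (n : ℕ) : ℝ :=
  (∏ i ∈ Finset.Icc 1 n, l i) / (∏ i ∈ Finset.Icc 1 n, r i)

/-- `x_n = Σ_{i=0}^{n-1} t_i`. -/
noncomputable def xp (l r : ℕ → ℝ) (n : ℕ) : ℝ :=
  ∑ i ∈ Finset.range n, tp l r i

/-- The natural filtration of the process `X` (σ-algebra generated by `X_0, …, X_m`). -/
def natFilt {Ω : Type*} (X : ℕ → Ω → ℕ) (m : ℕ) : MeasurableSpace Ω :=
  ⨆ i ∈ Finset.range (m + 1), MeasurableSpace.comap (X i) ⊤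

/-- A birth–death chain on ℕ started at `k`, with up–probabilities `r n` and
down–probabilities `l n` for states `n ≥ 1`, and `0` absorbing.  The Markov
property is encoded by conditioning on arbitrary events of the natural filtration. -/
structure IsBDChain {Ω : Type*} [MeasurableSpace Ω] (P : Measure Ω)
    (X : ℕ → Ω → ℕ) (k : ℕ) (l r : ℕ → ℝ) : Prop where
  isProb : IsProbabilityMeasure P
  one_le_k : 1 ≤ k
  l_pos : ∀ n, 1 ≤ n → 0 < l n
  r_pos : ∀ n, 1 ≤ n → 0 < r n
  lr_one : ∀ n, 1 ≤ n → l n + r n = 1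
  meas : ∀ m, Measurable (X m)
  init : ∀ᵐ ω ∂P, X 0 ω = k
  absorb : ∀ᵐ ω ∂P, ∀ m, X m ω = 0 → X (m + 1) ω = 0
  step_up : ∀ m n, 1 ≤ n → ∀ A : Set Ω, MeasurableSet[natFilt X m] A →
    P (A ∩ {ω | X m ω = n ∧ X (m + 1) ω = n + 1}) =
      ENNReal.ofReal (r n) * P (A ∩ {ω | X m ω = n})
  step_down : ∀ m n, 1 ≤ n → ∀ A : Set Ω, MeasurableSet[natFilt X m] A →
    P (A ∩ {ω | X m ω = n ∧ X (m + 1) ω = n - 1}) =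
      ENNReal.ofReal (l n) * P (A ∩ {ω | X m ω = n})

/-- A (finite-valued) stopping time for the natural filtration of `X`. -/
def IsBDStop {Ω : Type*} (X : ℕ → Ω → ℕ) (T : Ω → ℕ) : Prop :=
  ∀ m, MeasurableSet[natFilt X m] {ω | T ω = m}

/-- An extended-ℕ-valued stopping time for the natural filtration of `X`. -/
def IsBDStopE {Ω : Type*} (X : ℕ → Ω → ℕ) (T : Ω → ℕ∞) : Prop :=
  ∀ m : ℕ, MeasurableSet[natFilt X m] {ω | T ω = (m : ℕ∞)}

/-- First hitting time of the set `S ⊆ ℕ` by the path `m ↦ X m ω`, valued in `ℕ∞`. -/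
noncomputable def hitTime {Ω : Type*} (X : ℕ → Ω → ℕ) (S : Set ℕ) (ω : Ω) : ℕ∞ :=
  sInf ((fun m : ℕ => (m : ℕ∞)) '' {m | X m ω ∈ S})

/-- `T_∂`: the first hitting time of `0`, with value `∞` if `0` is never hit. -/
noncomputable def hit0 {Ω : Type*} (X : ℕ → Ω → ℕ) (ω : Ω) : ℕ∞ :=
  hitTime X {0} ω

/-- `G_T^n`: the number of times `m` with `0 ≤ m ≤ T-1` and `X_m = n` (finite `T`). -/
def count {Ω : Type*} (X : ℕ → Ω → ℕ) (n : ℕ) (T : Ω → ℕ) (ω : Ω) : ℕ :=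
  ((Finset.range (T ω)).filter fun m => X m ω = n).card

/-- `G_τ^n` for an `ℕ∞`-valued time `τ`, valued in `ℝ≥0∞`. -/
noncomputable def countE {Ω : Type*} (X : ℕ → Ω → ℕ) (n : ℕ) (τ : Ω → ℕ∞) (ω : Ω) : ℝ≥0∞ :=
  ∑' m : ℕ, if (m : ℕ∞) < τ ω ∧ X m ω = n then 1 else 0

/-!
The function `x` is harmonic for the chain (`r_n x_{n+1} + l_n x_{n-1} = x_n`, `x_0 = 0`), so
`x(X_m)` is a nonnegative martingale. Since `t_n → t_∞ ∈ (0, ∞)`, there are constants with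
`0 < c ≤ t_n ≤ C`, hence `c n ≤ x_n ≤ C n`. As `X_m ≤ k + m`, optional stopping at `min (T_m) N`
and dominated convergence in `N` give `E x(X_{T_m}) = x_k`, so in particular `E X_{T_m} ≤ x_k / c`.
The martingale converges almost surely, while every move from a state `n ≥ 1` changes `x` by at
least `c`; hence the chain is absorbed at `0` almost surely and `P(X_{T_m} ≠ 0) → 0`. Finally
`x_n - t_∞ n = o(n)` vanishes at `0`, so `E x(X_{T_m}) - t_∞ E X_{T_m} → 0`.
-/

section Arithmetic

variable {l r : ℕ → ℝ}

lemma tp_pos (hl : ∀ n, 1 ≤ n → 0 < l n) (hr : ∀ n, 1 ≤ n → 0 < r n) (n : ℕ) :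
    0 < tp l r n :=
  div_pos (prod_pos fun i hi => hl i (mem_Icc.1 hi).1) (prod_pos fun i hi => hr i (mem_Icc.1 hi).1)

lemma tp_succ_mul (hr : ∀ n, 1 ≤ n → 0 < r n) (n : ℕ) :
    tp l r (n + 1) * r (n + 1) = tp l r n * l (n + 1) := by
  have hrn : ∏ i ∈ Icc 1 n, r i ≠ 0 := (prod_pos fun i hi => hr i (mem_Icc.1 hi).1).ne'
  have hr1 : r (n + 1) ≠ 0 := (hr (n + 1) n.succ_pos).ne'
  simp only [tp, prod_Icc_succ_top (Nat.succ_pos n)]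
  field_simp

@[simp]
lemma xp_zero : xp l r 0 = 0 := rfl

lemma xp_succ (n : ℕ) : xp l r (n + 1) = xp l r n + tp l r n :=
  sum_range_succ _ n

lemma xp_nonneg (hl : ∀ n, 1 ≤ n → 0 < l n) (hr : ∀ n, 1 ≤ n → 0 < r n) (n : ℕ) :
    0 ≤ xp l r n :=
  sum_nonneg fun i _ => (tp_pos hl hr i).le

lemma xp_mono (hl : ∀ n, 1 ≤ n → 0 < l n) (hr : ∀ n, 1 ≤ n → 0 < r n) : Monotone (xp l r) :=
  monotone_nat_of_le_succ fun n => by rw [xp_succ]; linarith [tp_pos hl hr n]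

lemma mul_le_xp {c : ℝ} (hc : ∀ i, c ≤ tp l r i) (n : ℕ) : c * n ≤ xp l r n := by
  simpa [xp, mul_comm] using card_nsmul_le_sum (range n) (tp l r) c fun i _ => hc i

lemma xp_le_mul {C : ℝ} (hC : ∀ i, tp l r i ≤ C) (n : ℕ) : xp l r n ≤ C * n := by
  simpa [xp, mul_comm] using sum_le_card_nsmul (range n) (tp l r) C fun i _ => hC i

lemma r_mul_xp_succ_add_l_mul_xp_pred (hr : ∀ n, 1 ≤ n → 0 < r n)
    (hlr : ∀ n, 1 ≤ n → l n + r n = 1) {n : ℕ} (hn : 1 ≤ n) :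
    r n * xp l r (n + 1) + l n * xp l r (n - 1) = xp l r n := by
  obtain ⟨j, rfl⟩ := Nat.exists_eq_add_of_le' hn
  rw [Nat.add_sub_cancel]
  linear_combination r (j + 1) * xp_succ (l := l) (r := r) (j + 1)
    - l (j + 1) * xp_succ (l := l) (r := r) j + tp_succ_mul (l := l) hr j
    + xp l r (j + 1) * hlr (j + 1) j.succ_pos

lemma le_abs_xp_sub_xp {c : ℝ} (hc : ∀ i, c ≤ tp l r i) {a b : ℕ} (ha : 1 ≤ a)
    (hab : b = a + 1 ∨ b = a - 1) : c ≤ |xp l r b - xp l r a| := by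
  obtain ⟨j, rfl⟩ := Nat.exists_eq_add_of_le' ha
  rcases hab with rfl | rfl
  · rw [xp_succ, add_sub_cancel_left]; exact (hc _).trans (le_abs_self _)
  · rw [xp_succ, sub_add_cancel_left, abs_neg]
    exact (hc _).trans (le_abs_self _)

end Arithmetic

lemma exists_pos_le_of_tendsto {u : ℕ → ℝ} {a : ℝ} (hu : ∀ n, 0 < u n) (ha : 0 < a)
    (h : Tendsto u atTop (𝓝 a)) : ∃ c > 0, ∀ n, c ≤ u n := by
  obtain ⟨K, hK⟩ := (h.inv₀ ha.ne').bddAbove_range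
  have hK0 : 0 < K := (inv_pos.2 (hu 0)).trans_le (hK ⟨0, rfl⟩)
  refine ⟨K⁻¹, inv_pos.2 hK0, fun n => ?_⟩
  rw [inv_le_comm₀ hK0 (hu n)]
  exact hK ⟨n, rfl⟩

lemma isLittleO_sum_range_sub_mul {u : ℕ → ℝ} {a : ℝ} (h : Tendsto u atTop (𝓝 a)) :
    (fun n => ∑ i ∈ range n, u i - a * n) =o[atTop] (fun n => (n : ℝ)) := by
  rw [Asymptotics.isLittleO_iff_tendsto fun n hn => by simp [Nat.cast_eq_zero.1 hn]]
  refine (sub_self a ▸ h.cesaro.sub_const a).congr' <| (eventually_ne_atTop 0).mono fun n hn => ?_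
  dsimp only
  rw [sub_div, mul_div_cancel_right₀ _ (Nat.cast_ne_zero.2 hn), div_eq_inv_mul]

section NatValued

variable {Ω : Type*} [MeasurableSpace Ω] {P : Measure Ω}

lemma integrable_natCast_of_lintegral_lt_top {S : Ω → ℕ} (hS : Measurable S)
    (h : ∫⁻ ω, (S ω : ℝ≥0∞) ∂P < ⊤) : Integrable (fun ω => (S ω : ℝ)) P :=
  ⟨((measurable_of_countable (fun n : ℕ => (n : ℝ))).comp hS).aestronglyMeasurable,
    (hasFiniteIntegral_iff_ofReal (ae_of_all _ fun _ => Nat.cast_nonneg _)).2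
      (by simpa only [ENNReal.ofReal_natCast] using h)⟩

lemma lintegral_natCast_eq_ofReal_integral {S : Ω → ℕ} (hS : Integrable (fun ω => (S ω : ℝ)) P) :
    ∫⁻ ω, (S ω : ℝ≥0∞) ∂P = ENNReal.ofReal (∫ ω, (S ω : ℝ) ∂P) := by
  rw [ofReal_integral_eq_lintegral_ofReal hS (ae_of_all _ fun _ => Nat.cast_nonneg _)]
  simp only [ENNReal.ofReal_natCast]

lemma exists_abs_le_of_isLittleO {f : ℕ → ℝ} (hf0 : f 0 = 0) (hf : f =o[atTop] fun n => (n : ℝ))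
    {ε : ℝ} (hε : 0 < ε) : ∃ B ≥ 0, ∀ n, |f n| ≤ (if n = 0 then 0 else B) + ε * n := by
  obtain ⟨N, hN⟩ := eventually_atTop.1 (hf.bound hε)
  refine ⟨∑ n ∈ range N, |f n|, sum_nonneg fun _ _ => abs_nonneg _, fun n => ?_⟩
  have hεn : 0 ≤ ε * n := by positivity
  rcases Nat.eq_zero_or_pos n with rfl | hn
  · simp [hf0]
  rw [if_neg hn.ne']
  rcases lt_or_ge n N with h | h
  · linarith [single_le_sum (fun i _ => abs_nonneg (f i)) (mem_range.2 h)]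
  · have := hN n h
    rw [Real.norm_eq_abs, Real.norm_natCast] at this
    linarith [sum_nonneg fun i (_ : i ∈ range N) => abs_nonneg (f i)]

lemma tendsto_integral_comp_of_isLittleO [IsFiniteMeasure P] {Y : ℕ → Ω → ℕ}
    (hY : ∀ m, Measurable (Y m)) (hYi : ∀ m, Integrable (fun ω => (Y m ω : ℝ)) P) {R : ℝ}
    (hR : ∀ m, ∫ ω, (Y m ω : ℝ) ∂P ≤ R) (h0 : Tendsto (fun m => P {ω | Y m ω ≠ 0}) atTop (𝓝 0))
    {f : ℕ → ℝ} (hf0 : f 0 = 0) (hf : f =o[atTop] fun n => (n : ℝ)) :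
    Tendsto (fun m => ∫ ω, f (Y m ω) ∂P) atTop (𝓝 0) := by
  rw [Metric.tendsto_atTop]
  intro η hη
  have hR0 : 0 ≤ R := (integral_nonneg fun _ => Nat.cast_nonneg _).trans (hR 0)
  set ε := η / (2 * (R + 1))
  have hε : 0 < ε := by positivity
  obtain ⟨B, hB0, hB⟩ := exists_abs_le_of_isLittleO hf0 hf hε
  have hPreal : Tendsto (fun m => P.real {ω | Y m ω ≠ 0}) atTop (𝓝 0) := by
    have := (ENNReal.tendsto_toReal ENNReal.zero_ne_top).comp h0
    rwa [ENNReal.toReal_zero] at this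
  obtain ⟨M, hM⟩ := eventually_atTop.1
    (hPreal.eventually (gt_mem_nhds (show 0 < η / (2 * (B + 1)) by positivity)))
  refine ⟨M, fun m hm => ?_⟩
  set s := {ω | Y m ω ≠ 0}
  have hs : MeasurableSet s := hY m (measurableSet_singleton 0).compl
  have hBi : Integrable (s.indicator fun _ => B) P := (integrable_const B).indicator hs
  have hle := norm_integral_le_of_norm_le (f := fun ω => f (Y m ω))
    (g := fun ω => s.indicator (fun _ => B) ω + ε * (Y m ω : ℝ)) (hBi.add ((hYi m).const_mul ε))
    (ae_of_all _ fun ω => by simpa [s, Set.indicator_apply] using hB (Y m ω))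
  rw [integral_add hBi ((hYi m).const_mul ε), integral_indicator_const B hs, integral_const_mul,
    smul_eq_mul] at hle
  have hPB : P.real s * B < η / 2 := by
    calc P.real s * B ≤ P.real s * (B + 1) := by nlinarith [measureReal_nonneg (μ := P) (s := s)]
      _ < η / (2 * (B + 1)) * (B + 1) := mul_lt_mul_of_pos_right (hM m hm) (by positivity)
      _ = η / 2 := by field_simp
  have hεR : ε * ∫ ω, (Y m ω : ℝ) ∂P ≤ η / 2 := by
    calc ε * ∫ ω, (Y m ω : ℝ) ∂P ≤ ε * (R + 1) := by gcongr; linarith [hR m]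
      _ = η / 2 := by simp only [ε]; field_simp
  rw [Real.dist_eq, sub_zero, ← Real.norm_eq_abs]
  linarith

end NatValued

section NaturalFiltration

variable {Ω : Type*} {X : ℕ → Ω → ℕ}

lemma natFilt_mono : Monotone (natFilt X) := fun _ _ h =>
  biSup_mono fun _ hi => mem_range.2 ((mem_range.1 hi).trans_le (Nat.succ_le_succ h))

lemma measurable_natFilt {i m : ℕ} (h : i ≤ m) : Measurable[natFilt X m] (X i) :=
  (measurable_iff_comap_le.2 le_rfl).mono
    (le_iSup₂_of_le (f := fun i (_ : i ∈ range (m + 1)) => MeasurableSpace.comap (X i) ⊤) i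
      (mem_range.2 (Nat.lt_succ_of_le h)) le_rfl) le_rfl

variable [MeasurableSpace Ω]

lemma natFilt_le (hX : ∀ i, Measurable (X i)) (m : ℕ) : natFilt X m ≤ ‹MeasurableSpace Ω› :=
  iSup₂_le fun i _ => (hX i).comap_le

def natFiltration (hX : ∀ i, Measurable (X i)) : Filtration ℕ ‹MeasurableSpace Ω› :=
  ⟨natFilt X, natFilt_mono, natFilt_le hX⟩

-- `WithTop.some`, not the cast into `ℕ∞`, to match the coercion in `IsStoppingTime.min_const`.
lemma IsBDStop.isStoppingTime (hX : ∀ i, Measurable (X i)) {S : Ω → ℕ} (hS : IsBDStop X S) :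
    IsStoppingTime (natFiltration hX) fun ω => WithTop.some (S ω) :=
  isStoppingTime_of_measurableSet_eq fun i => by
    change MeasurableSet[natFilt X i] _
    convert hS i using 3
    exact WithTop.coe_eq_coe

lemma IsBDStop.measurable (hX : ∀ i, Measurable (X i)) {S : Ω → ℕ} (hS : IsBDStop X S) :
    Measurable S :=
  measurable_to_countable' fun j => natFilt_le hX j _ (hS j)

lemma measurable_stopped (hX : ∀ i, Measurable (X i)) {S : Ω → ℕ} (hS : Measurable S) :
    Measurable fun ω => X (S ω) ω :=
  (measurable_from_prod_countable_left (f := fun p : Ω × ℕ => X p.2 p.1) hX).comp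
    (measurable_id.prodMk hS)

end NaturalFiltration

lemma exists_hit0_eq {Ω : Type*} {X : ℕ → Ω → ℕ} {ω : Ω} (h : hit0 X ω ≠ ⊤) :
    ∃ j : ℕ, hit0 X ω = j ∧ X j ω = 0 := by
  have hne : ((fun m : ℕ => (m : ℕ∞)) '' {m | X m ω ∈ ({0} : Set ℕ)}).Nonempty :=
    Set.nonempty_iff_ne_empty.2 fun he => h (by rw [hit0, hitTime, he, sInf_empty])
  obtain ⟨j, hj, hjeq⟩ := csInf_mem hne
  exact ⟨j, hjeq.symm, hj⟩

lemma hit0_ne_top_of_eq_zero {Ω : Type*} {X : ℕ → Ω → ℕ} {ω : Ω} {j : ℕ} (h : X j ω = 0) :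
    hit0 X ω ≠ ⊤ :=
  ne_top_of_le_ne_top (ENat.natCast_ne_top j) (sInf_le ⟨j, h, rfl⟩)

lemma tendsto_measure_stopped_ne_zero {Ω : Type*} [MeasurableSpace Ω] {P : Measure Ω}
    [IsFiniteMeasure P] {X : ℕ → Ω → ℕ} (hX : ∀ m, Measurable (X m))
    (hfin : ∀ᵐ ω ∂P, hit0 X ω ≠ ⊤) {T : ℕ → Ω → ℕ} (hT : ∀ m, Measurable (T m))
    (hconv : ∀ᵐ ω ∂P, Tendsto (fun m => (T m ω : ℕ∞)) atTop (𝓝 (hit0 X ω))) :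
    Tendsto (fun m => P {ω | X (T m ω) ω ≠ 0}) atTop (𝓝 0) := by
  have h := tendsto_measure_of_ae_tendsto_indicator_of_isFiniteMeasure (μ := P)
    (As := fun m => {ω | X (T m ω) ω ≠ 0}) atTop
    MeasurableSet.empty
    (fun m => measurable_stopped hX (hT m) (measurableSet_singleton 0).compl) ?_
  · simpa using h
  filter_upwards [hconv, hfin] with ω hω hne
  obtain ⟨j, hj, hXj⟩ := exists_hit0_eq hne
  rw [hj, ENat.nhds_natCast, tendsto_pure] at hω
  filter_upwards [hω] with m hm
  simp [Nat.cast_inj.1 hm, hXj]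

namespace IsBDChain

variable {Ω : Type*} [MeasurableSpace Ω] {P : Measure Ω} {X : ℕ → Ω → ℕ} {k : ℕ} {l r : ℕ → ℝ}

lemma ae_step_of_eq (hC : IsBDChain P X k l r) (m : ℕ) {n : ℕ} (hn : 1 ≤ n) :
    ∀ᵐ ω ∂P, X m ω = n → X (m + 1) ω = n + 1 ∨ X (m + 1) ω = n - 1 := by
  have := hC.isProb
  set E : Set Ω := {ω | X m ω = n}
  set U : Set Ω := {ω | X m ω = n ∧ X (m + 1) ω = n + 1}
  set D : Set Ω := {ω | X m ω = n ∧ X (m + 1) ω = n - 1}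
  have hmeas : ∀ j, MeasurableSet {ω | X m ω = n ∧ X (m + 1) ω = j} := fun j =>
    (hC.meas m (measurableSet_singleton n)).inter (hC.meas (m + 1) (measurableSet_singleton j))
  have hup : P U = ENNReal.ofReal (r n) * P E := by
    simpa using hC.step_up m n hn Set.univ MeasurableSet.univ
  have hdown : P D = ENNReal.ofReal (l n) * P E := by
    simpa using hC.step_down m n hn Set.univ MeasurableSet.univ
  have hsplit : P (U ∪ D) = P E := by
    rw [measure_union (Set.disjoint_left.2 fun _ hU hD => by
      have := hU.2; have := hD.2; omega) (hmeas _), hup,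
      hdown, ← add_mul, ← ENNReal.ofReal_add (hC.r_pos n hn).le (hC.l_pos n hn).le, add_comm,
      hC.lr_one n hn, ENNReal.ofReal_one, one_mul]
  have hsub : U ∪ D ⊆ E := Set.union_subset (fun _ h => h.1) fun _ h => h.1
  have hnull : P (E \ (U ∪ D)) = 0 := by
    rw [measure_sdiff hsub ((hmeas _).union (hmeas _)).nullMeasurableSet (measure_ne_top _ _),
      hsplit, tsub_self]
  filter_upwards [measure_eq_zero_iff_ae_notMem.1 hnull] with ω hω hE
  by_contra h
  exact hω ⟨hE, fun hUD => h (hUD.elim (fun hU => Or.inl hU.2) fun hD => Or.inr hD.2)⟩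

lemma ae_step (hC : IsBDChain P X k l r) :
    ∀ᵐ ω ∂P, ∀ m, 1 ≤ X m ω → X (m + 1) ω = X m ω + 1 ∨ X (m + 1) ω = X m ω - 1 := by
  have h : ∀ᵐ ω ∂P, ∀ m n, 1 ≤ n → X m ω = n → X (m + 1) ω = n + 1 ∨ X (m + 1) ω = n - 1 := by
    simp only [ae_all_iff, eventually_imp_distrib_left]
    exact fun m n hn => hC.ae_step_of_eq m hn
  filter_upwards [h] with ω hω m hm
  exact hω m _ hm rfl

lemma ae_le_add (hC : IsBDChain P X k l r) : ∀ᵐ ω ∂P, ∀ m, X m ω ≤ k + m := by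
  filter_upwards [hC.ae_step, hC.init, hC.absorb] with ω hstep h0 habs m
  induction m with
  | zero => omega
  | succ m ih =>
    rcases Nat.eq_zero_or_pos (X m ω) with h | h
    · rw [habs m h]; omega
    · rcases hstep m h with h' | h' <;> omega

lemma setLIntegral_xp_succ (hC : IsBDChain P X k l r) {m n : ℕ} {B : Set Ω}
    (hB : MeasurableSet[natFilt X m] B) (hBn : B ⊆ {ω | X m ω = n}) :
    ∫⁻ ω in B, ENNReal.ofReal (xp l r (X (m + 1) ω)) ∂P = ENNReal.ofReal (xp l r n) * P B := by
  have hB' : MeasurableSet B := natFilt_le hC.meas m B hB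
  rcases Nat.eq_zero_or_pos n with rfl | hn
  · rw [xp_zero, ENNReal.ofReal_zero, zero_mul]
    refine (setLIntegral_eq_zero_iff' hB' ((measurable_of_countable
      (fun j => ENNReal.ofReal (xp l r j))).comp (hC.meas (m + 1))).aemeasurable).2 ?_
    filter_upwards [hC.absorb] with ω habs hω
    simp [habs m (hBn hω)]
  set U := B ∩ {ω | X (m + 1) ω = n + 1}
  set D := B ∩ {ω | X (m + 1) ω = n - 1}
  have hU : MeasurableSet U := hB'.inter (hC.meas (m + 1) (measurableSet_singleton _))
  have hD : MeasurableSet D := hB'.inter (hC.meas (m + 1) (measurableSet_singleton _))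
  have hBUD : B =ᵐ[P] (U ∪ D : Set Ω) := by
    refine eventuallyEq_set.2 ?_
    filter_upwards [hC.ae_step_of_eq m hn] with ω hω
    exact ⟨fun h => (hω (hBn h)).imp (⟨h, ·⟩) (⟨h, ·⟩), fun h => h.elim (·.1) (·.1)⟩
  have hPU : P U = ENNReal.ofReal (r n) * P B := by
    convert hC.step_up m n hn B hB using 2
    · exact Set.ext fun ω => ⟨fun h => ⟨h.1, hBn h.1, h.2⟩, fun h => ⟨h.1, h.2.2⟩⟩
    · exact congrArg P (Set.inter_eq_left.2 hBn).symm
  have hPD : P D = ENNReal.ofReal (l n) * P B := by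
    convert hC.step_down m n hn B hB using 2
    · exact Set.ext fun ω => ⟨fun h => ⟨h.1, hBn h.1, h.2⟩, fun h => ⟨h.1, h.2.2⟩⟩
    · exact congrArg P (Set.inter_eq_left.2 hBn).symm
  have hx := fun j => xp_nonneg hC.l_pos hC.r_pos j
  have hUD : Disjoint U D := Set.disjoint_left.2 fun ω hU hD => by
    have h1 : X (m + 1) ω = n + 1 := hU.2
    have h2 : X (m + 1) ω = n - 1 := hD.2
    omega
  rw [setLIntegral_congr hBUD, lintegral_union hD hUD,
    setLIntegral_congr_fun hU fun ω hω => by rw [hω.2],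
    setLIntegral_congr_fun hD fun ω hω => by rw [hω.2], setLIntegral_const, setLIntegral_const,
    hPU, hPD, ← r_mul_xp_succ_add_l_mul_xp_pred hC.r_pos hC.lr_one hn,
    ENNReal.ofReal_add (mul_nonneg (hC.r_pos n hn).le (hx _))
      (mul_nonneg (hC.l_pos n hn).le (hx _)),
    ENNReal.ofReal_mul (hC.r_pos n hn).le, ENNReal.ofReal_mul (hC.l_pos n hn).le]
  ring

lemma setIntegral_xp_succ (hC : IsBDChain P X k l r) {m : ℕ} {A : Set Ω}
    (hA : MeasurableSet[natFilt X m] A) :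
    ∫ ω in A, xp l r (X m ω) ∂P = ∫ ω in A, xp l r (X (m + 1) ω) ∂P := by
  have hA' : MeasurableSet A := natFilt_le hC.meas m A hA
  have hx := fun j => xp_nonneg hC.l_pos hC.r_pos j
  have hmeas := fun j => (measurable_of_countable (xp l r)).comp (hC.meas j)
  rw [integral_eq_lintegral_of_nonneg_ae (ae_of_all _ fun _ => hx _) (hmeas m).aestronglyMeasurable,
    integral_eq_lintegral_of_nonneg_ae (ae_of_all _ fun _ => hx _)
      (hmeas (m + 1)).aestronglyMeasurable]
  congr 1
  have hAn : ∀ n, MeasurableSet[natFilt X m] (A ∩ {ω | X m ω = n}) := fun n =>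
    hA.inter (measurable_natFilt le_rfl (measurableSet_singleton n))
  have hdisj : Pairwise (Function.onFun Disjoint fun n => A ∩ {ω | X m ω = n}) := fun i j hij =>
    Set.disjoint_left.2 fun _ hi hj => hij (hi.2.symm.trans hj.2)
  have hA_eq : A = ⋃ n, A ∩ {ω | X m ω = n} := by
    ext ω; simp
  rw [hA_eq, lintegral_iUnion (fun n => natFilt_le hC.meas m _ (hAn n)) hdisj,
    lintegral_iUnion (fun n => natFilt_le hC.meas m _ (hAn n)) hdisj]
  refine tsum_congr fun n => ?_
  rw [hC.setLIntegral_xp_succ (hAn n) Set.inter_subset_right,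
    setLIntegral_congr_fun (natFilt_le hC.meas m _ (hAn n)) fun ω hω => by rw [hω.2],
    setLIntegral_const]

lemma martingale_xp (hC : IsBDChain P X k l r) :
    Martingale (fun m ω => xp l r (X m ω)) (natFiltration hC.meas) P := by
  have := hC.isProb
  refine martingale_of_setIntegral_eq_succ (fun m => ?_) (fun m => ?_)
    fun m A hA => hC.setIntegral_xp_succ hA
  · exact ((measurable_of_countable (xp l r)).comp
      (measurable_natFilt (X := X) le_rfl)).stronglyMeasurable
  · refine Integrable.of_bound
      ((measurable_of_countable (xp l r)).comp (hC.meas m)).aestronglyMeasurable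
      (xp l r (k + m)) ?_
    filter_upwards [hC.ae_le_add] with ω h
    rw [Real.norm_of_nonneg (xp_nonneg hC.l_pos hC.r_pos _)]
    exact xp_mono hC.l_pos hC.r_pos (h m)

lemma integral_stoppedValue_xp (hC : IsBDChain P X k l r) {τ : Ω → ℕ∞}
    (hτ : IsStoppingTime (natFiltration hC.meas) τ) {N : ℕ} (hN : ∀ ω, τ ω ≤ N) :
    ∫ ω, stoppedValue (fun m ω => xp l r (X m ω)) τ ω ∂P = xp l r k := by
  have := hC.isProb
  have h0 := isStoppingTime_const (natFiltration hC.meas) 0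
  have hle : (fun _ => WithTop.some 0) ≤ τ := fun _ => bot_le
  have hsub := hC.martingale_xp.submartingale.expected_stoppedValue_mono h0 hτ hle hN
  have hsup := hC.martingale_xp.neg.submartingale.expected_stoppedValue_mono h0 hτ hle hN
  have hinit : ∫ ω, xp l r (X 0 ω) ∂P = xp l r k := by
    rw [integral_congr_ae (hC.init.mono fun ω h => congrArg (xp l r) h)]
    simp
  rw [stoppedValue_const] at hsub hsup
  simp only [stoppedValue, Pi.neg_apply, integral_neg, neg_le_neg_iff] at hsup
  exact hinit ▸ le_antisymm hsup hsub

lemma integral_xp (hC : IsBDChain P X k l r) (m : ℕ) :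
    ∫ ω, xp l r (X m ω) ∂P = xp l r k := by
  have := hC.integral_stoppedValue_xp (isStoppingTime_const _ m) fun _ => le_rfl
  rwa [stoppedValue_const] at this

lemma integral_xp_stopped (hC : IsBDChain P X k l r) {C : ℝ} (hCb : ∀ i, tp l r i ≤ C)
    {S : Ω → ℕ} (hS : IsBDStop X S) (hSi : Integrable (fun ω => (S ω : ℝ)) P) :
    ∫ ω, xp l r (X (S ω) ω) ∂P = xp l r k := by
  have := hC.isProb
  have hC0 : 0 ≤ C := (tp_pos hC.l_pos hC.r_pos 0).le.trans (hCb 0)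
  have htrunc : ∀ m, ∫ ω, xp l r (X (min (S ω) m) ω) ∂P = xp l r k := fun m => by
    have := hC.integral_stoppedValue_xp ((hS.isStoppingTime hC.meas).min_const m) (N := m)
      fun ω => min_le_right _ _
    simp only [stoppedValue, ← WithTop.coe_min] at this
    exact this
  have hlim : Tendsto (fun m => ∫ ω, xp l r (X (min (S ω) m) ω) ∂P) atTop
      (𝓝 (∫ ω, xp l r (X (S ω) ω) ∂P)) := by
    refine tendsto_integral_of_dominated_convergence (fun ω => C * (k + S ω)) (fun m => ?_)
      (((integrable_const _).add hSi).const_mul C) (fun m => ?_) (ae_of_all _ fun ω => ?_)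
    · exact ((measurable_of_countable (xp l r)).comp (measurable_stopped hC.meas
        ((hS.measurable hC.meas).min measurable_const))).aestronglyMeasurable
    · filter_upwards [hC.ae_le_add] with ω h
      rw [Real.norm_of_nonneg (xp_nonneg hC.l_pos hC.r_pos _)]
      refine (xp_le_mul hCb _).trans (mul_le_mul_of_nonneg_left ?_ hC0)
      exact_mod_cast (h _).trans (by omega)
    · exact tendsto_atTop_of_eventually_const (i₀ := S ω) fun m hm => by rw [min_eq_left hm]
  simp only [htrunc] at hlim
  exact tendsto_nhds_unique hlim tendsto_const_nhds

lemma ae_hit0_ne_top (hC : IsBDChain P X k l r) {c : ℝ} (hc : 0 < c) (hcb : ∀ i, c ≤ tp l r i) :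
    ∀ᵐ ω ∂P, hit0 X ω ≠ ⊤ := by
  have := hC.isProb
  have hbdd : ∀ m, eLpNorm (fun ω => xp l r (X m ω)) 1 P ≤ ENNReal.ofReal (xp l r k) := fun m => by
    rw [eLpNorm_one_eq_lintegral_enorm,
      ← ofReal_integral_norm_eq_lintegral_enorm (hC.martingale_xp.integrable m)]
    simp_rw [Real.norm_of_nonneg (xp_nonneg hC.l_pos hC.r_pos _), hC.integral_xp m]
    rfl
  filter_upwards [hC.martingale_xp.submartingale.exists_ae_tendsto_of_bdd hbdd, hC.ae_step]
    with ω ⟨L, hL⟩ hstep htop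
  have hpos : ∀ m, 1 ≤ X m ω := fun m =>
    Nat.one_le_iff_ne_zero.2 fun h => hit0_ne_top_of_eq_zero h htop
  have hdiff : Tendsto (fun m => |xp l r (X (m + 1) ω) - xp l r (X m ω)|) atTop (𝓝 0) := by
    simpa using ((hL.comp (tendsto_add_atTop_nat 1)).sub hL).abs
  obtain ⟨m, hm⟩ := (hdiff.eventually (gt_mem_nhds hc)).exists
  exact (le_abs_xp_sub_xp hcb (hpos m) (hstep m (hpos m))).not_gt hm

lemma integrable_stopped (hC : IsBDChain P X k l r) {S : Ω → ℕ} (hS : Measurable S)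
    (hSi : Integrable (fun ω => (S ω : ℝ)) P) :
    Integrable (fun ω => (X (S ω) ω : ℝ)) P := by
  have := hC.isProb
  refine ((integrable_const (k : ℝ)).add hSi).mono' ((measurable_of_countable
    (fun n : ℕ => (n : ℝ))).comp (measurable_stopped hC.meas hS)).aestronglyMeasurable ?_
  filter_upwards [hC.ae_le_add] with ω h
  rw [Real.norm_natCast, Pi.add_apply]
  exact_mod_cast h (S ω)

lemma integrable_xp_stopped (hC : IsBDChain P X k l r) {C : ℝ} (hCb : ∀ i, tp l r i ≤ C)
    {S : Ω → ℕ} (hS : Measurable S) (hSi : Integrable (fun ω => (S ω : ℝ)) P) :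
    Integrable (fun ω => xp l r (X (S ω) ω)) P :=
  ((hC.integrable_stopped hS hSi).const_mul C).mono' ((measurable_of_countable (xp l r)).comp
    (measurable_stopped hC.meas hS)).aestronglyMeasurable (ae_of_all _ fun ω => by
      rw [Real.norm_of_nonneg (xp_nonneg hC.l_pos hC.r_pos _)]; exact xp_le_mul hCb _)

end IsBDChain

theorem stmt0_general {Ω : Type*} [MeasurableSpace Ω] (P : Measure Ω) (X : ℕ → Ω → ℕ)
    (k : ℕ) (l r : ℕ → ℝ) (hC : IsBDChain P X k l r)
    (tinf : ℝ) (htpos : 0 < tinf) (htlim : Tendsto (tp l r) atTop (nhds tinf))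
    (T : ℕ → Ω → ℕ) (hstop : ∀ m, IsBDStop X (T m))
    (hint : ∀ m, ∫⁻ ω, (T m ω : ℝ≥0∞) ∂P < ⊤)
    (hconv : ∀ᵐ ω ∂P, Tendsto (fun m => (T m ω : ℕ∞)) atTop (nhds (hit0 X ω))) :
    Tendsto (fun m => ∫⁻ ω, (X (T m ω) ω : ℝ≥0∞) ∂P) atTop
      (nhds (ENNReal.ofReal (xp l r k / tinf))) := by
  have := hC.isProb
  obtain ⟨c, hc, hcb⟩ := exists_pos_le_of_tendsto (tp_pos hC.l_pos hC.r_pos) htpos htlim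
  obtain ⟨C, hC_ub⟩ := htlim.bddAbove_range
  have hCb : ∀ i, tp l r i ≤ C := fun i => hC_ub ⟨i, rfl⟩
  have hT : ∀ m, Measurable (T m) := fun m => (hstop m).measurable hC.meas
  have hTi m := integrable_natCast_of_lintegral_lt_top (hT m) (hint m)
  have hYi m := hC.integrable_stopped (hT m) (hTi m)
  have hxY m := hC.integral_xp_stopped hCb (hstop m) (hTi m)
  have hxYi m := hC.integrable_xp_stopped hCb (hT m) (hTi m)
  have hbdd : ∀ m, ∫ ω, (X (T m ω) ω : ℝ) ∂P ≤ xp l r k / c := fun m => by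
    rw [le_div_iff₀ hc, ← hxY m, mul_comm, ← integral_const_mul]
    exact integral_mono ((hYi m).const_mul c) (hxYi m) fun ω => mul_le_xp hcb _
  have herr := tendsto_integral_comp_of_isLittleO (fun m => measurable_stopped hC.meas (hT m)) hYi
    hbdd (tendsto_measure_stopped_ne_zero hC.meas (hC.ae_hit0_ne_top hc hcb) hT hconv)
    (f := fun n => xp l r n - tinf * n) (by simp) (isLittleO_sum_range_sub_mul htlim)
  simp only [integral_sub (hxYi _) ((hYi _).const_mul tinf), integral_const_mul, hxY] at herr
  have hEY := (herr.const_sub (xp l r k)).div_const tinf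
  simp only [sub_sub_cancel, sub_zero, mul_div_cancel_left₀ _ htpos.ne'] at hEY
  simp only [lintegral_natCast_eq_ofReal_integral (hYi _)]
  exact ENNReal.tendsto_ofReal hEY

/-- If `t_∞ = lim_n t_n` exists and lies in `(0,∞)`, then for any
non-decreasing sequence of stopping times `T_m` with `E[T_m] < ∞` and `T_m → T_∂` a.s.,
`E[X_{T_m}] → x_k / t_∞ = (1 + l_1/r_1 + ⋯ + (l_1⋯l_{k-1})/(r_1⋯r_{k-1})) / t_∞`. -/
theorem stmt0 {Ω : Type*} [MeasurableSpace Ω] (P : Measure Ω) (X : ℕ → Ω → ℕ)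
    (k : ℕ) (l r : ℕ → ℝ) (hC : IsBDChain P X k l r)
    (tinf : ℝ) (htpos : 0 < tinf) (htlim : Tendsto (tp l r) atTop (nhds tinf))
    (T : ℕ → Ω → ℕ) (hstop : ∀ m, IsBDStop X (T m))
    (hmono : ∀ ω, Monotone fun m => T m ω)
    (hint : ∀ m, ∫⁻ ω, (T m ω : ℝ≥0∞) ∂P < ⊤)
    (hconv : ∀ᵐ ω ∂P, Tendsto (fun m => (T m ω : ℕ∞)) atTop (nhds (hit0 X ω))) :
    Tendsto (fun m => ∫⁻ ω, (X (T m ω) ω : ℝ≥0∞) ∂P) atTop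
      (nhds (ENNReal.ofReal (xp l r k / tinf))) :=
  stmt0_general P X k l r hC tinf htpos htlim T hstop hint hconv
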